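/- arXiv:1306.1589 — 3 statements merged into one kernel-verified Lean document; each statement's English description precedes it below -/
import Mathlib

section
/- Let X = ⋃_{k∈K} X_k be a finite feasible set with objective J : X → ℝ², utopia points J^u_k = (min_{x∈X_k} J₁, min_{x∈X_k} J₂), let X* denote the set of globally Pareto optimal points of X and X*_l the set of Pareto optimal points of subproblem l. If for index l there exists x ∈ X*, x ∉ X_l, with J(x) ≤ J^u_l componentwise and J(x) < J^u_l in at least one component, then X*_l ∩ X* = ∅; i.e., no Pareto-optimal point of subproblem l is globally Pareto optimal. -/
/-- Correctness of Phase A pruning: if some globally Pareto-optimal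
point `x ∉ X_l` satisfies `J(x) ≤ J^u_l` with strict inequality in at least one
component, then `X*_l ∩ X* = ∅`. -/
theorem phaseA_pruning_correct
    {α K : Type*} (X : Set α) (Xk : K → Set α) (J : α → ℝ × ℝ)
    (hfin : X.Finite)
    (hcover : X = ⋃ k, Xk k)
    (Xstar : Set α)
    (hXstar : Xstar = {x ∈ X | ¬ ∃ x' ∈ X, J x' ≤ J x ∧ J x' ≠ J x})
    (Xkstar : K → Set α)
    (hXkstar : ∀ k, Xkstar k =
      {x ∈ Xk k | ¬ ∃ x' ∈ Xk k, J x' ≤ J x ∧ J x' ≠ J x})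
    (u : K → ℝ × ℝ)
    (hu : ∀ k, u k = (sInf ((fun x => (J x).1) '' Xk k),
                      sInf ((fun x => (J x).2) '' Xk k)))
    (l : K) (x : α) (hx : x ∈ Xstar) (hxl : x ∉ Xk l)
    (hle : J x ≤ u l)
    (hlt : (J x).1 < (u l).1 ∨ (J x).2 < (u l).2) :
    Xkstar l ∩ Xstar = ∅ := by
  ext y
  simp only [Set.mem_inter_iff, Set.mem_empty_iff_false, iff_false]
  rintro ⟨hyk, hy⟩
  have hsub : Xk l ⊆ X := hcover ▸ Set.subset_iUnion Xk l
  have hyXk : y ∈ Xk l := by rw [hXkstar] at hyk; exact hyk.1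
  have hfin1 : ((fun x => (J x).1) '' Xk l).Finite := (hfin.subset hsub).image _
  have hfin2 : ((fun x => (J x).2) '' Xk l).Finite := (hfin.subset hsub).image _
  have h1 : (u l).1 ≤ (J y).1 := by
    rw [hu]
    exact csInf_le hfin1.bddBelow ⟨y, hyXk, rfl⟩
  have h2 : (u l).2 ≤ (J y).2 := by
    rw [hu]
    exact csInf_le hfin2.bddBelow ⟨y, hyXk, rfl⟩
  have hxX : x ∈ X := by rw [hXstar] at hx; exact hx.1
  have hJle : J x ≤ J y := ⟨le_trans hle.1 h1, le_trans hle.2 h2⟩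
  have hJne : J x ≠ J y := by
    intro h
    rcases hlt with h' | h'
    · exact absurd (h ▸ h1) (not_le.mpr h')
    · exact absurd (h ▸ h2) (not_le.mpr h')
  rw [hXstar] at hy
  exact hy.2 ⟨x, hxX, hJle, hJne⟩
end

section
/- Let X = ⋃_{k∈K} X_k finite with J : X → ℝ², utopia points J^u_k, and let K₁^m = {k ∈ K : no l ≠ k has J^u_l ≤ J^u_k and J^u_l ≠ J^u_k} (classes with non-dominated utopia points). Let M = ⋃_{k∈K₁^m} X*_k be the master set and K∅ = {l : ∃ x ∈ M with J(x) ≤ J^u_l and J(x) ≠ J^u_l, x ∉ X_l}. Then the global Pareto set X* is contained in ⋃_{k ∈ K \ K∅} X*_k. -/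
/-!
A globally Pareto-optimal `x` lies in some class `X_k`, and `J^u_k ≤ J x`. If `k` were pruned,
a point of the master set (which lies in `X`) would strictly dominate `J^u_k`, hence `J x`.
So `k` survives, and `x`, being non-dominated in `X`, is non-dominated in `X_k ⊆ X`.
-/

section Pareto

variable {α β : Type*}

def paretoSet [Preorder β] (J : α → β) (S : Set α) : Set α :=
  {x ∈ S | ¬ ∃ x' ∈ S, J x' ≤ J x ∧ J x' ≠ J x}

variable {J : α → β} {S T : Set α} {x y : α}

theorem paretoSet_subset [Preorder β] : paretoSet J S ⊆ S :=
  fun _ hx => hx.1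

theorem mem_paretoSet_of_subset [Preorder β] (hTS : T ⊆ S) (hx : x ∈ paretoSet J S)
    (hxT : x ∈ T) : x ∈ paretoSet J T :=
  ⟨hxT, fun ⟨x', hx'T, hdom⟩ => hx.2 ⟨x', hTS hx'T, hdom⟩⟩

theorem not_lt_of_mem_paretoSet [PartialOrder β] (hx : x ∈ paretoSet J S) (hy : y ∈ S) :
    ¬ J y < J x :=
  fun hlt => hx.2 ⟨y, hy, hlt.le, hlt.ne⟩

end Pareto

theorem sInf_image_fst_sInf_image_snd_le {α β γ : Type*} [ConditionallyCompleteLattice β]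
    [ConditionallyCompleteLattice γ] {J : α → β × γ} {S : Set α} {x : α}
    (hS : BddBelow (J '' S)) (hx : x ∈ S) :
    (sInf ((fun x => (J x).1) '' S), sInf ((fun x => (J x).2) '' S)) ≤ J x := by
  have hfst := monotone_fst.map_bddBelow hS
  have hsnd := monotone_snd.map_bddBelow hS
  rw [Set.image_image] at hfst hsnd
  exact ⟨csInf_le hfst ⟨x, hx, rfl⟩, csInf_le hsnd ⟨x, hx, rfl⟩⟩

theorem global_pareto_subset_unpruned_union_general
    {α K : Type*} (X : Set α) (Xk : K → Set α) (J : α → ℝ × ℝ)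
    (hfin : X.Finite)
    (hcover : X = ⋃ k, Xk k)
    (Xstar : Set α)
    (hXstar : Xstar = {x ∈ X | ¬ ∃ x' ∈ X, J x' ≤ J x ∧ J x' ≠ J x})
    (Xkstar : K → Set α)
    (hXkstar : ∀ k, Xkstar k =
      {x ∈ Xk k | ¬ ∃ x' ∈ Xk k, J x' ≤ J x ∧ J x' ≠ J x})
    (u : K → ℝ × ℝ)
    (hu : ∀ k, u k = (sInf ((fun x => (J x).1) '' Xk k),
                      sInf ((fun x => (J x).2) '' Xk k)))
    (K1m : Set K)
    (M : Set α) (hM : M = ⋃ k ∈ K1m, Xkstar k)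
    (Kempty : Set K)
    (hKempty : Kempty = {l | ∃ x ∈ M, J x ≤ u l ∧ J x ≠ u l ∧ x ∉ Xk l}) :
    Xstar ⊆ ⋃ k ∈ {k | k ∉ Kempty}, Xkstar k := by
  have hXkX : ∀ k, Xk k ⊆ X := fun k => hcover ▸ Set.subset_iUnion Xk k
  have hMX : M ⊆ X :=
    hM ▸ Set.iUnion₂_subset fun k _ => hXkstar k ▸ paretoSet_subset.trans (hXkX k)
  intro x hx
  rw [hXstar] at hx
  obtain ⟨k, hxk⟩ := Set.mem_iUnion.mp (hcover ▸ hx.1)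
  have hux : u k ≤ J x := hu k ▸
    sInf_image_fst_sInf_image_snd_le ((hfin.subset (hXkX k)).image J).bddBelow hxk
  have hk : k ∉ Kempty := by
    rw [hKempty]
    rintro ⟨y, hyM, hyu, hyne, -⟩
    exact not_lt_of_mem_paretoSet hx (hMX hyM) ((lt_of_le_of_ne hyu hyne).trans_le hux)
  exact Set.mem_biUnion hk (hXkstar k ▸ mem_paretoSet_of_subset (hXkX k) hx hxk)

/-- after Phase A pruning, the global Pareto set is contained in the
union of the subproblem Pareto sets of the unpruned classes `K \ K∅`. -/
theorem global_pareto_subset_unpruned_union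
    {α K : Type*} (X : Set α) (Xk : K → Set α) (J : α → ℝ × ℝ)
    (hfin : X.Finite)
    (hcover : X = ⋃ k, Xk k)
    (Xstar : Set α)
    (hXstar : Xstar = {x ∈ X | ¬ ∃ x' ∈ X, J x' ≤ J x ∧ J x' ≠ J x})
    (Xkstar : K → Set α)
    (hXkstar : ∀ k, Xkstar k =
      {x ∈ Xk k | ¬ ∃ x' ∈ Xk k, J x' ≤ J x ∧ J x' ≠ J x})
    (u : K → ℝ × ℝ)
    (hu : ∀ k, u k = (sInf ((fun x => (J x).1) '' Xk k),
                      sInf ((fun x => (J x).2) '' Xk k)))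
    (K1m : Set K)
    (hK1m : K1m = {k | ¬ ∃ l, l ≠ k ∧ u l ≤ u k ∧ u l ≠ u k})
    (M : Set α) (hM : M = ⋃ k ∈ K1m, Xkstar k)
    (Kempty : Set K)
    (hKempty : Kempty = {l | ∃ x ∈ M, J x ≤ u l ∧ J x ≠ u l ∧ x ∉ Xk l}) :
    Xstar ⊆ ⋃ k ∈ {k | k ∉ Kempty}, Xkstar k :=
  global_pareto_subset_unpruned_union_general X Xk J hfin hcover Xstar hXstar Xkstar hXkstar u hu
    K1m M hM Kempty hKempty
end

section
/- (Phase B can lose optimality) There exists a finite set X = X₁ ∪ X₂ with objective J : X → ℝ² such that: the center point of subproblem 2 (a minimizer of (J₁+J₂)/2 over X₂) is dominated by a point of X*₁, yet X*₂ ∩ X* ≠ ∅; i.e., pruning a subproblem because its weighted-sum center point is dominated can discard genuinely Pareto-optimal points. -/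
/-!
The centre point of `X₂ = {(1, 1), (-1, 4)}` is `(1, 1)`, which is dominated by the only point
`(0, 0)` of `X₁`. The other point `(-1, 4)` of `X₂` is an extreme point of the front: its first
objective is strictly smaller than that of every other point of `X₁ ∪ X₂`, so nothing dominates it.
-/

/-- The Pareto (non-dominated) subset of `S ⊆ ℝ²` under the componentwise order. -/
def pareto (S : Set (ℝ × ℝ)) : Set (ℝ × ℝ) :=
  {s ∈ S | ¬ ∃ t ∈ S, t ≤ s ∧ t ≠ s}

theorem mem_pareto_iff {S : Set (ℝ × ℝ)} {s : ℝ × ℝ} :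
    s ∈ pareto S ↔ s ∈ S ∧ ∀ t ∈ S, t ≤ s → t = s := by
  simp only [pareto, Set.mem_ofPred_eq, not_exists, not_and, not_not]

@[simp]
theorem pareto_singleton (a : ℝ × ℝ) : pareto {a} = {a} := by
  ext s
  simp only [mem_pareto_iff, Set.mem_singleton_iff]
  exact ⟨And.left, fun hs => ⟨hs, fun t ht _ => ht.trans hs.symm⟩⟩

theorem mem_pareto_of_mem_pareto_of_subset {S T : Set (ℝ × ℝ)} {s : ℝ × ℝ}
    (hs : s ∈ pareto T) (hST : S ⊆ T) (hsS : s ∈ S) : s ∈ pareto S :=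
  mem_pareto_iff.2 ⟨hsS, fun t ht => (mem_pareto_iff.1 hs).2 t (hST ht)⟩

theorem mem_pareto_of_fst_lt {S : Set (ℝ × ℝ)} {s : ℝ × ℝ} (hs : s ∈ S)
    (hmin : ∀ t ∈ S, t ≠ s → s.1 < t.1) : s ∈ pareto S := by
  refine mem_pareto_iff.2 ⟨hs, fun t ht hts => ?_⟩
  by_contra hne
  exact (hmin t ht hne).not_ge hts.1

/-- Phase B can lose optimality: there exist finite subproblems
`X₁, X₂ ⊆ ℝ²` (objective = identity) such that the weighted-sum center point of
`X₂` is dominated by a point of `P(X₁)`, yet `P(X₂) ∩ P(X₁ ∪ X₂) ≠ ∅`. -/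
theorem phaseB_can_lose_optimality :
    ∃ X₁ X₂ : Set (ℝ × ℝ), X₁.Finite ∧ X₂.Finite ∧ X₁.Nonempty ∧ X₂.Nonempty ∧
      ∃ c ∈ X₂,
        (∀ t ∈ X₂, 0.5 * c.1 + 0.5 * c.2 ≤ 0.5 * t.1 + 0.5 * t.2) ∧
        (∃ p ∈ pareto X₁, p ≤ c ∧ p ≠ c) ∧
        (pareto X₂ ∩ pareto (X₁ ∪ X₂)).Nonempty := by
  have hextreme : ((-1 : ℝ), (4 : ℝ)) ∈ pareto ({(0, 0)} ∪ {(1, 1), (-1, 4)}) := by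
    refine mem_pareto_of_fst_lt (by simp) ?_
    simp only [Set.singleton_union, Set.mem_insert_iff, Set.mem_singleton_iff]
    rintro t (rfl | rfl | rfl) hne
    · norm_num
    · norm_num
    · exact absurd rfl hne
  refine ⟨{(0, 0)}, {(1, 1), (-1, 4)}, Set.finite_singleton _, Set.toFinite _,
    Set.singleton_nonempty _, Set.insert_nonempty _ _, (1, 1), by simp, ?_,
    ⟨(0, 0), by simp, by norm_num, by norm_num⟩,
    ⟨(-1, 4), mem_pareto_of_mem_pareto_of_subset hextreme Set.subset_union_right (by simp),
      hextreme⟩⟩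
  rintro t (rfl | rfl) <;> norm_num
end
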